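/- arXiv:2402.12514 — 9 statements merged into one kernel-verified Lean document; each statement's English description precedes it below -/
import Mathlib

section
/- Let B be a Boolean algebra and let C(B) = {(a, b) ∈ B × B : a ⊔ b = ⊤} with meet (a, b) ⊓ (c, d) = (a ⊔ c, b ⊓ d), join (a, b) ⊔ (c, d) = (a ⊓ c, b ⊔ d), bottom (⊤, ⊥) and top (⊥, ⊤). For every (a, b) ∈ C(B): (1) the element ¬(a, b) := (b, bᶜ) lies in C(B), satisfies (a, b) ⊓ (b, bᶜ) = (⊤, ⊥), and every (c, d) ∈ C(B) with (a, b) ⊓ (c, d) = (⊤, ⊥) satisfies (c, d) ≤ (b, bᶜ); (2) the element D(a, b) := (aᶜ, a) lies in C(B), satisfies (a, b) ⊔ (aᶜ, a) = (⊥, ⊤), and every (c, d) ∈ C(B) with (a, b) ⊔ (c, d) = (⊥, ⊤) satisfies (aᶜ, a) ≤ (c, d). That is, ¬ is the pseudo-complement and D is the dual pseudo-complement on C(B). -/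
/-- The order on saturated contracts. -/
def Cle {B : Type*} [BooleanAlgebra B] (p q : B × B) : Prop :=
  q.1 ≤ p.1 ∧ p.2 ≤ q.2

/-- The meet of contracts. -/
def Cmeet {B : Type*} [BooleanAlgebra B] (p q : B × B) : B × B :=
  (p.1 ⊔ q.1, p.2 ⊓ q.2)

/-- The join of contracts. -/
def Cjoin {B : Type*} [BooleanAlgebra B] (p q : B × B) : B × B :=
  (p.1 ⊓ q.1, p.2 ⊔ q.2)

/-- `¬(a,b) = (b, bᶜ)` is the pseudo-complement and `D(a,b) = (aᶜ, a)` is the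
dual pseudo-complement on the contract algebra `C(B)`. -/
theorem contracts_pseudocomplements {B : Type*} [BooleanAlgebra B] (a b : B)
    (hab : a ⊔ b = ⊤) :
    -- (1) (b, bᶜ) is the pseudo-complement of (a, b)
    (b ⊔ bᶜ = ⊤ ∧
      Cmeet (a, b) (b, bᶜ) = ((⊤ : B), (⊥ : B)) ∧
      ∀ c d : B, c ⊔ d = ⊤ → Cmeet (a, b) (c, d) = ((⊤ : B), (⊥ : B)) →
        Cle (c, d) (b, bᶜ)) ∧
    -- (2) (aᶜ, a) is the dual pseudo-complement of (a, b)
    (aᶜ ⊔ a = ⊤ ∧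
      Cjoin (a, b) (aᶜ, a) = ((⊥ : B), (⊤ : B)) ∧
      ∀ c d : B, c ⊔ d = ⊤ → Cjoin (a, b) (c, d) = ((⊥ : B), (⊤ : B)) →
        Cle (aᶜ, a) (c, d)) := by
  refine ⟨⟨sup_compl_eq_top, ?_, ?_⟩, ⟨compl_sup_eq_top, ?_, ?_⟩⟩
  · simp [Cmeet, hab]
  · intro c d hcd h
    simp only [Cmeet, Prod.mk.injEq] at h
    obtain ⟨h1, h2⟩ := h
    refine ⟨?_, le_compl_iff_disjoint_left.mpr (disjoint_iff.mpr h2)⟩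
    calc b = b ⊓ (c ⊔ d) := by rw [hcd, inf_top_eq]
    _ = b ⊓ c ⊔ b ⊓ d := inf_sup_left b c d
    _ ≤ c ⊔ b ⊓ d := sup_le_sup_right inf_le_right _
    _ = c := by rw [h2, sup_bot_eq]
  · simp [Cjoin, sup_comm b a, hab]
  · intro c d hcd h
    simp only [Cjoin, Prod.mk.injEq] at h
    obtain ⟨h1, h2⟩ := h
    refine ⟨le_compl_iff_disjoint_left.mpr (disjoint_iff.mpr h1), ?_⟩
    calc a = a ⊓ (c ⊔ d) := by rw [hcd, inf_top_eq]
    _ = a ⊓ c ⊔ a ⊓ d := inf_sup_left a c d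
    _ ≤ a ⊓ c ⊔ d := sup_le_sup_left inf_le_right _
    _ = d := by rw [h1, bot_sup_eq]
end

section
/- Let B be a Boolean algebra and let C(B) = {(a, b) ∈ B × B : a ⊔ b = ⊤} with the contract-algebra operations, ¬(a, b) = (b, bᶜ) and D(a, b) = (aᶜ, a). Then for all x, y ∈ C(B): (1) the Stone equation ¬x ⊔ ¬¬x = (⊥, ⊤) holds; (2) the co-Stone equation Dx ⊓ DDx = (⊤, ⊥) holds; (3) the regularity inequality x ⊓ Dx ≤ y ⊔ ¬y holds. -/
/-- The pseudo-complement `¬(a,b) = (b, bᶜ)`. -/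
def Cneg {B : Type*} [BooleanAlgebra B] (p : B × B) : B × B :=
  (p.2, p.2ᶜ)

/-- The dual pseudo-complement `D(a,b) = (aᶜ, a)`. -/
def Cd {B : Type*} [BooleanAlgebra B] (p : B × B) : B × B :=
  (p.1ᶜ, p.1)

/-- The contract algebra satisfies the Stone equation, the co-Stone equation and
the regularity inequality. -/
theorem contracts_stone_costone_regular {B : Type*} [BooleanAlgebra B]
    (x y : B × B) (hx : x.1 ⊔ x.2 = ⊤) (hy : y.1 ⊔ y.2 = ⊤) :
    -- (1) Stone equation
    Cjoin (Cneg x) (Cneg (Cneg x)) = ((⊥ : B), (⊤ : B)) ∧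
    -- (2) co-Stone equation
    Cmeet (Cd x) (Cd (Cd x)) = ((⊤ : B), (⊥ : B)) ∧
    -- (3) regularity
    Cle (Cmeet x (Cd x)) (Cjoin y (Cneg y)) := by
  refine ⟨?_, ?_, ?_, ?_⟩ <;>
    simp [Cjoin, Cmeet, Cneg, Cd, Cle, inf_compl_eq_bot, sup_compl_eq_top]
end

section
/- Let A be a bounded distributive lattice with unary operations ¬ and D and a constant γ such that: for every a, ¬a is the greatest element b with a ⊓ b = ⊥ and Da is the smallest element b with a ⊔ b = ⊤; the Stone equation ¬a ⊔ ¬¬a = ⊤ and the co-Stone equation Da ⊓ DDa = ⊥ hold; the regularity inequality a ⊓ Da ≤ b ⊔ ¬b holds for all a, b; and ¬γ = ⊥, Dγ = ⊤. Define φ : A → A × A by φ(a) = (Da ⊓ γ, a ⊓ γ). Then: (1) φ(a) lies in {(x, y) : x ≤ γ, y ≤ γ, x ⊔ y = γ} for every a; (2) φ is injective; (3) φ maps A onto {(x, y) : x ≤ γ, y ≤ γ, x ⊔ y = γ}; (4) φ(a ⊓ b) = (φ(a).1 ⊔ φ(b).1, φ(a).2 ⊓ φ(b).2) and φ(a ⊔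 b) = (φ(a).1 ⊓ φ(b).1, φ(a).2 ⊔ φ(b).2); (5) φ(¬a) = (a ⊓ γ, ¬(a ⊓ γ) ⊓ γ) and φ(Da) = (¬(Da ⊓ γ) ⊓ γ, Da ⊓ γ); (6) φ(⊥) = (γ, ⊥), φ(γ) = (γ, γ) and φ(⊤) = (⊥, γ). Consequently, φ is an isomorphism of A onto the contract algebra of the Boolean algebra {x ∈ A : x ≤ γ}. -/
/-- Every centred three-valued double p-algebra is isomorphic, via
`φ(a) = (Da ⊓ γ, a ⊓ γ)`, to the contract algebra over the Boolean algebra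
`{x : x ≤ γ}`. -/
theorem c3dp_iso_contract_algebra {A : Type*} [DistribLattice A] [BoundedOrder A]
    (neg D : A → A) (γ : A)
    (hneg : ∀ a : A, IsGreatest {b : A | a ⊓ b = ⊥} (neg a))
    (hD : ∀ a : A, IsLeast {b : A | a ⊔ b = ⊤} (D a))
    (hStone : ∀ a : A, neg a ⊔ neg (neg a) = ⊤)
    (hcoStone : ∀ a : A, D a ⊓ D (D a) = ⊥)
    (hreg : ∀ a b : A, a ⊓ D a ≤ b ⊔ neg b)
    (hγ₁ : neg γ = ⊥) (hγ₂ : D γ = ⊤)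
    (φ : A → A × A) (hφ : ∀ a : A, φ a = (D a ⊓ γ, a ⊓ γ)) :
    -- (1) φ lands in the set of contracts over {x : x ≤ γ}
    (∀ a : A, φ a ∈ {p : A × A | p.1 ≤ γ ∧ p.2 ≤ γ ∧ p.1 ⊔ p.2 = γ}) ∧
    -- (2) φ is injective
    Function.Injective φ ∧
    -- (3) φ is onto the set of contracts
    (∀ p : A × A, p.1 ≤ γ → p.2 ≤ γ → p.1 ⊔ p.2 = γ → ∃ a : A, φ a = p) ∧
    -- (4) φ preserves meets and joins (computed contract-wise)
    (∀ a b : A, φ (a ⊓ b) = ((φ a).1 ⊔ (φ b).1, (φ a).2 ⊓ (φ b).2) ∧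
      φ (a ⊔ b) = ((φ a).1 ⊓ (φ b).1, (φ a).2 ⊔ (φ b).2)) ∧
    -- (5) φ preserves the pseudo-complement and the dual pseudo-complement
    (∀ a : A, φ (neg a) = (a ⊓ γ, neg (a ⊓ γ) ⊓ γ) ∧
      φ (D a) = (neg (D a ⊓ γ) ⊓ γ, D a ⊓ γ)) ∧
    -- (6) φ preserves the constants
    (φ ⊥ = (γ, ⊥) ∧ φ γ = (γ, γ) ∧ φ ⊤ = (⊥, γ)) := by
  -- basic consequences of the definitions
  have nm : ∀ a : A, a ⊓ neg a = ⊥ := fun a => (hneg a).1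
  have nle : ∀ a b : A, a ⊓ b = ⊥ → b ≤ neg a := fun a b h => (hneg a).2 h
  have dj : ∀ a : A, a ⊔ D a = ⊤ := fun a => (hD a).1
  have dle : ∀ a b : A, a ⊔ b = ⊤ → D a ≤ b := fun a b h => (hD a).2 h
  have nanti : ∀ a b : A, a ≤ b → neg b ≤ neg a := fun a b h =>
    nle a _ (le_bot_iff.1 ((inf_le_inf_right _ h).trans (nm b).le))
  have danti : ∀ a b : A, a ≤ b → D b ≤ D a := fun a b h =>
    dle b _ (top_le_iff.1 ((dj a).ge.trans (sup_le_sup_right h _)))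
  have negD_le : ∀ a : A, neg (D a) ≤ a := by
    intro a
    calc neg (D a) = (neg (D a) ⊓ a) ⊔ (neg (D a) ⊓ D a) := by
          rw [← inf_sup_left, dj, inf_top_eq]
      _ = (neg (D a) ⊓ a) ⊔ ⊥ := by rw [inf_comm (neg (D a)) (D a), nm]
      _ ≤ a := by simp [inf_le_right]
  have le_Dneg : ∀ a : A, a ≤ D (neg a) := by
    intro a
    calc a = (a ⊓ neg a) ⊔ (a ⊓ D (neg a)) := by
          rw [← inf_sup_left, dj, inf_top_eq]
      _ = ⊥ ⊔ (a ⊓ D (neg a)) := by rw [nm]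
      _ ≤ D (neg a) := by simp [inf_le_right]
  have DDeq : ∀ a : A, D (D a) = neg (D a) := by
    intro a
    refine le_antisymm (nle (D a) _ (hcoStone a)) ?_
    calc neg (D a) = (neg (D a) ⊓ D a) ⊔ (neg (D a) ⊓ D (D a)) := by
          rw [← inf_sup_left, dj, inf_top_eq]
      _ = ⊥ ⊔ (neg (D a) ⊓ D (D a)) := by rw [inf_comm (neg (D a)) (D a), nm]
      _ ≤ D (D a) := by simp [inf_le_right]
  have regγ : ∀ a : A, a ⊓ D a ≤ γ := by
    intro a
    have := hreg a γ
    rwa [hγ₁, sup_bot_eq] at this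
  have γle : ∀ b : A, γ ≤ b ⊔ neg b := by
    intro b
    have := hreg γ b
    rwa [hγ₂, inf_top_eq] at this
  have neg_inf_γ : ∀ a : A, neg (a ⊓ γ) = neg a := by
    intro a
    refine le_antisymm ?_ (nanti _ _ inf_le_left)
    refine nle a _ ?_
    have h1 : (a ⊓ neg (a ⊓ γ)) ⊓ γ = ⊥ := by
      rw [inf_right_comm]
      exact nm (a ⊓ γ)
    have h2 : a ⊓ neg (a ⊓ γ) ≤ neg γ := nle γ _ (by rwa [inf_comm])
    rw [hγ₁] at h2
    exact le_bot_iff.1 h2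
  have star : ∀ a : A, a = (a ⊓ γ) ⊔ neg (D a) := by
    intro a
    refine le_antisymm ?_ (sup_le inf_le_left (negD_le a))
    have h1 : a ⊓ D a ≤ a ⊓ γ := le_inf inf_le_left (regγ a)
    have h2 : a ⊓ D (D a) ≤ neg (D a) := by rw [DDeq]; exact inf_le_right
    calc a = (a ⊓ D a) ⊔ (a ⊓ D (D a)) := by
          rw [← inf_sup_left, dj, inf_top_eq]
      _ ≤ (a ⊓ γ) ⊔ neg (D a) := sup_le_sup h1 h2
  have star' : ∀ a : A, a = (a ⊔ γ) ⊓ D (neg a) := by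
    intro a
    refine le_antisymm (le_inf le_sup_left (le_Dneg a)) ?_
    have h1 : a ⊔ γ ≤ a ⊔ neg a := sup_le le_sup_left (γle a)
    have h2 : D (neg a) ≤ neg (neg a) := dle (neg a) _ (hStone a)
    calc (a ⊔ γ) ⊓ D (neg a) ≤ (a ⊔ neg a) ⊓ neg (neg a) := inf_le_inf h1 h2
      _ = (a ⊓ neg (neg a)) ⊔ (neg a ⊓ neg (neg a)) := by rw [inf_sup_right]
      _ = (a ⊓ neg (neg a)) ⊔ ⊥ := by rw [nm]
      _ ≤ a := by simp [inf_le_left]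
  have Dnegγ : ∀ a : A, D (neg a) ⊓ γ = a ⊓ γ := by
    intro a
    conv_rhs => rw [star' a]
    rw [inf_assoc, ← inf_comm γ (D (neg a)), ← inf_assoc,
      inf_eq_right.2 (le_sup_right : γ ≤ a ⊔ γ), inf_comm]
  have D_inf : ∀ a b : A, D (a ⊓ b) = D a ⊔ D b := by
    intro a b
    refine le_antisymm (dle _ _ ?_) (sup_le (danti _ _ inf_le_left) (danti _ _ inf_le_right))
    rw [sup_inf_right, ← sup_assoc a, dj a, top_sup_eq, sup_left_comm b (D a) (D b),
      dj b, sup_top_eq, top_inf_eq]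
  have D_sup : ∀ a b : A, D (a ⊔ b) = D a ⊓ D b := by
    intro a b
    refine le_antisymm (dle _ _ ?_) ?_
    · rw [sup_inf_left, sup_assoc, sup_comm b (D a), ← sup_assoc, dj a, top_sup_eq,
        sup_assoc, dj b, sup_top_eq, inf_top_eq]  -- may need fixing
    · -- hard direction, uses coStone
      have habd : a ⊔ (b ⊔ D (a ⊔ b)) = ⊤ := by rw [← sup_assoc]; exact dj (a ⊔ b)
      have h1 : D a ≤ b ⊔ D (D a) ⊔ D (a ⊔ b) := by
        refine dle a _ (top_le_iff.1 ?_)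
        calc (⊤ : A) = a ⊔ (b ⊔ D (a ⊔ b)) := habd.symm
          _ ≤ a ⊔ (b ⊔ D (D a) ⊔ D (a ⊔ b)) := by
              gcongr
              exact le_sup_left
      have h2 : b ⊔ D (D a) ⊔ D (a ⊔ b) = ⊤ := by
        refine top_le_iff.1 ?_
        calc (⊤ : A) = D a ⊔ D (D a) := (dj (D a)).symm
          _ ≤ (b ⊔ D (D a) ⊔ D (a ⊔ b)) ⊔ D (D a) := sup_le_sup_right h1 _
          _ ≤ b ⊔ D (D a) ⊔ D (a ⊔ b) := by
              refine sup_le le_rfl ?_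
              exact le_sup_of_le_left le_sup_right
      have h3 : D b ≤ D (D a) ⊔ D (a ⊔ b) := by
        refine dle b _ ?_
        rw [← sup_assoc]
        exact h2
      calc D a ⊓ D b ≤ D a ⊓ (D (D a) ⊔ D (a ⊔ b)) := inf_le_inf_left _ h3
        _ = (D a ⊓ D (D a)) ⊔ (D a ⊓ D (a ⊔ b)) := inf_sup_left _ _ _
        _ = ⊥ ⊔ (D a ⊓ D (a ⊔ b)) := by rw [hcoStone]
        _ ≤ D (a ⊔ b) := by simp [inf_le_right]
  have D_bot : D (⊥ : A) = ⊤ := by have := dj (⊥ : A); rwa [bot_sup_eq] at this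
  have D_top : D (⊤ : A) = ⊥ := le_bot_iff.1 (dle ⊤ ⊥ (top_sup_eq ⊥))
  have D_of_le : ∀ y : A, y ≤ γ → D y = ⊤ := fun y hy =>
    top_le_iff.1 (hγ₂ ▸ danti y γ hy)
  refine ⟨?_, ?_, ?_, ?_, ?_, ?_, ?_, ?_⟩
  -- (1)
  · intro a
    rw [hφ]
    refine ⟨inf_le_right, inf_le_right, ?_⟩
    rw [← inf_sup_right, sup_comm (D a) a, dj a, top_inf_eq]
  -- (2)
  · intro a b h
    rw [hφ a, hφ b, Prod.mk.injEq] at h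
    obtain ⟨h1, h2⟩ := h
    calc a = (a ⊓ γ) ⊔ neg (D a) := star a
      _ = (a ⊓ γ) ⊔ neg (D a ⊓ γ) := by rw [neg_inf_γ]
      _ = (b ⊓ γ) ⊔ neg (D b ⊓ γ) := by rw [h1, h2]
      _ = (b ⊓ γ) ⊔ neg (D b) := by rw [neg_inf_γ]
      _ = b := (star b).symm
  -- (3)
  · intro p hx hy hxy
    refine ⟨p.2 ⊔ neg p.1, ?_⟩
    rw [hφ, D_sup, D_of_le _ hy, top_inf_eq]
    have e1 : D (neg p.1) ⊓ γ = p.1 := by rw [Dnegγ, inf_eq_left.2 hx]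
    have e2 : (p.2 ⊔ neg p.1) ⊓ γ = p.2 := by
      rw [inf_sup_right, inf_eq_left.2 hy]
      refine sup_eq_left.2 ?_
      calc neg p.1 ⊓ γ = neg p.1 ⊓ (p.1 ⊔ p.2) := by rw [hxy]
        _ = (neg p.1 ⊓ p.1) ⊔ (neg p.1 ⊓ p.2) := inf_sup_left _ _ _
        _ = ⊥ ⊔ (neg p.1 ⊓ p.2) := by rw [inf_comm (neg p.1) p.1, nm]
        _ ≤ p.2 := by simp [inf_le_right]
    exact Prod.ext e1 e2
  -- (4)
  · intro a b
    constructor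
    · rw [hφ a, hφ b, hφ (a ⊓ b), D_inf]
      refine Prod.ext ?_ ?_
      · exact inf_sup_right _ _ _
      · show a ⊓ b ⊓ γ = a ⊓ γ ⊓ (b ⊓ γ)
        rw [inf_inf_inf_comm, inf_idem]
    · rw [hφ a, hφ b, hφ (a ⊔ b), D_sup]
      refine Prod.ext ?_ ?_
      · show D a ⊓ D b ⊓ γ = D a ⊓ γ ⊓ (D b ⊓ γ)
        rw [inf_inf_inf_comm, inf_idem]
      · exact inf_sup_right _ _ _
  -- (5)
  · intro a
    constructor
    · rw [hφ (neg a)]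
      exact Prod.ext (Dnegγ a) (by simp only; rw [neg_inf_γ])
    · rw [hφ (D a)]
      exact Prod.ext (by simp only; rw [DDeq, neg_inf_γ]) rfl
  -- (6a)
  · rw [hφ, D_bot]
    simp
  -- (6b)
  · rw [hφ, hγ₂]
    simp
  -- (6c)
  · rw [hφ, D_top]
    simp
end

section
/- Let B be a Boolean algebra and let C(B) = {(a, b) ∈ B × B : a ⊔ b = ⊤} be its contract algebra with meet (a, b) ⊓ (c, d) = (a ⊔ c, b ⊓ d), join (a, b) ⊔ (c, d) = (a ⊓ c, b ⊔ d), pseudo-complement ¬(a, b) = (b, bᶜ), bottom (⊤, ⊥) and centre γ = (⊤, ⊤). Define ψ : B → C(B) by ψ(x) = (⊤, x). Then ψ is a bijection from B onto {z ∈ C(B) : z ≤ γ}, and it satisfies ψ(x ⊓ y) = ψ(x) ⊓ ψ(y), ψ(x ⊔ y) = ψ(x) ⊔ ψ(y), ψ(xᶜ) = ¬ψ(x) ⊓ γ, ψ(⊥) = (⊤, ⊥) and ψ(⊤) = γ. Consequently B is isomorphic to the Boolean algebra {z ∈ C(B) : z ≤ γ} with complement z ↦ ¬z ⊓ γ and top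 γ. -/
/-- `ψ(x) = (⊤, x)` is an isomorphism of `B` onto the Boolean algebra
`{z ∈ C(B) : z ≤ γ}` (with complement `z ↦ ¬z ⊓ γ` and top `γ = (⊤, ⊤)`). -/
theorem boolean_iso_below_centre {B : Type*} [BooleanAlgebra B]
    (ψ : B → B × B) (hψ : ∀ x : B, ψ x = ((⊤ : B), x)) :
    -- ψ is a bijection onto {z ∈ C(B) : z ≤ γ}
    Function.Injective ψ ∧
    (∀ x : B, (ψ x).1 ⊔ (ψ x).2 = ⊤ ∧ Cle (ψ x) ((⊤ : B), (⊤ : B))) ∧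
    (∀ z : B × B, z.1 ⊔ z.2 = ⊤ → Cle z ((⊤ : B), (⊤ : B)) → ∃ x : B, ψ x = z) ∧
    -- ψ preserves the operations
    (∀ x y : B, ψ (x ⊓ y) = Cmeet (ψ x) (ψ y)) ∧
    (∀ x y : B, ψ (x ⊔ y) = Cjoin (ψ x) (ψ y)) ∧
    (∀ x : B, ψ xᶜ = Cmeet (Cneg (ψ x)) ((⊤ : B), (⊤ : B))) ∧
    ψ ⊥ = ((⊤ : B), (⊥ : B)) ∧
    ψ ⊤ = ((⊤ : B), (⊤ : B)) := by
  refine ⟨?_, ?_, ?_, ?_, ?_, ?_, ?_, ?_⟩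
  · intro a b h; rw [hψ, hψ] at h; exact (Prod.mk.injEq .. ▸ h).2
  · intro x; simp [hψ, Cle]
  · rintro ⟨a, b⟩ h ⟨h1, h2⟩
    exact ⟨b, by rw [hψ]; exact Prod.ext (le_antisymm le_top h1).symm rfl⟩
  · intro x y; simp [hψ, Cmeet]
  · intro x y; simp [hψ, Cjoin]
  · intro x; simp [hψ, Cneg, Cmeet]
  · rw [hψ]
  · rw [hψ]
end

section
/- Let A be a bounded distributive lattice with bottom 0 and top 1 that is also a commutative monoid under an operation · with identity e, such that · is monotone in each argument, x ≤ x·x for all x, there is an involution ∼ with ∼∼x = x, the law 'z·x ≤ y implies z·∼y ≤ ∼x' holds, and ∼e = e. Then for all a ∈ A, a ⊓ ∼(a·1) = 0. -/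
/-- In any bounded odd Sugihara monoid, `a ⊓ ∼(a · 1) = 0`. -/
theorem bosm_inf_neg_mul_top {A : Type*} [DistribLattice A] [BoundedOrder A]
    (mul : A → A → A) (sm : A → A) (e : A)
    (mul_comm : ∀ x y : A, mul x y = mul y x)
    (mul_assoc : ∀ x y z : A, mul (mul x y) z = mul x (mul y z))
    (mul_e : ∀ x : A, mul x e = x)
    (mul_mono : ∀ x y z : A, x ≤ y → mul x z ≤ mul y z)
    (sq : ∀ x : A, x ≤ mul x x)
    (invol : ∀ x : A, sm (sm x) = x)
    (contra : ∀ x y z : A, mul z x ≤ y → mul z (sm y) ≤ sm x)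
    (sm_e : sm e = e) :
    ∀ a : A, a ⊓ sm (mul a ⊤) = ⊥ := by
  -- ∼ is antitone
  have anti : ∀ x y : A, x ≤ y → sm y ≤ sm x := by
    intro x y h
    have h1 : mul e x ≤ y := by rw [mul_comm, mul_e]; exact h
    have := contra x y e h1
    rwa [mul_comm, mul_e] at this
  -- ∼⊥ = ⊤
  have sm_bot : sm ⊥ = ⊤ := by
    have : ∀ y : A, y ≤ sm ⊥ := by
      intro y
      have := anti ⊥ (sm y) bot_le
      rwa [invol] at this
    exact top_unique (this ⊤)
  have sm_top : sm ⊤ = ⊥ := by rw [← sm_bot, invol]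
  intro a
  set b := a ⊓ sm (mul a ⊤) with hb
  have hb1 : b ≤ a := inf_le_left
  have hb2 : b ≤ sm (mul a ⊤) := inf_le_right
  have h3 : mul b ⊤ ≤ mul a ⊤ := mul_mono b a ⊤ hb1
  have h4 : b ≤ sm (mul b ⊤) := le_trans hb2 (anti _ _ h3)
  have h5 : mul b b ≤ mul b (sm (mul b ⊤)) := by
    rw [mul_comm b b, mul_comm b (sm (mul b ⊤))]
    exact mul_mono _ _ _ h4
  have h6 : mul b (sm (mul b ⊤)) ≤ sm ⊤ := contra ⊤ (mul b ⊤) b le_rfl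
  have : b ≤ ⊥ := by
    calc b ≤ mul b b := sq b
    _ ≤ mul b (sm (mul b ⊤)) := h5
    _ ≤ sm ⊤ := h6
    _ = ⊥ := sm_top
  exact le_bot_iff.mp this
end

section
/- Let A be a distributive lattice that is also a commutative monoid under an operation · with identity e, such that · is monotone in each argument, x ≤ x·x for all x, there is an involution ∼ with ∼∼x = x, the law 'z·x ≤ y implies z·∼y ≤ ∼x' holds, and ∼e = e. Then for all a, b ∈ A, (a·∼b) ⊓ (b·∼a) ≤ e. -/
/-- In any odd Sugihara monoid, `(a · ∼b) ⊓ (b · ∼a) ≤ e`. -/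
theorem osm_prelinearity_aux {A : Type*} [DistribLattice A]
    (mul : A → A → A) (sm : A → A) (e : A)
    (mul_comm : ∀ x y : A, mul x y = mul y x)
    (mul_assoc : ∀ x y z : A, mul (mul x y) z = mul x (mul y z))
    (mul_e : ∀ x : A, mul x e = x)
    (mul_mono : ∀ x y z : A, x ≤ y → mul x z ≤ mul y z)
    (sq : ∀ x : A, x ≤ mul x x)
    (invol : ∀ x : A, sm (sm x) = x)
    (contra : ∀ x y z : A, mul z x ≤ y → mul z (sm y) ≤ sm x)
    (sm_e : sm e = e) :
    ∀ a b : A, mul a (sm b) ⊓ mul b (sm a) ≤ e := by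
  intro a b
  -- key: x · ∼x ≤ e
  have key : ∀ x : A, mul x (sm x) ≤ e := by
    intro x
    have h : mul x e ≤ x := le_of_eq (mul_e x)
    have := contra e x x h
    rwa [sm_e] at this
  have mono2 : ∀ x y z w : A, x ≤ y → z ≤ w → mul x z ≤ mul y w := by
    intro x y z w h1 h2
    calc mul x z ≤ mul y z := mul_mono x y z h1
      _ = mul z y := mul_comm y z
      _ ≤ mul w y := mul_mono z w y h2
      _ = mul y w := mul_comm w y
  set c := mul a (sm b) ⊓ mul b (sm a) with hc
  have h1 : c ≤ mul c c := sq c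
  have h2 : mul c c ≤ mul (mul a (sm b)) (mul b (sm a)) :=
    mono2 _ _ _ _ inf_le_left inf_le_right
  have h3 : mul (mul a (sm b)) (mul b (sm a)) = mul (mul a (sm a)) (mul b (sm b)) := by
    calc mul (mul a (sm b)) (mul b (sm a))
        = mul a (mul (sm b) (mul b (sm a))) := mul_assoc _ _ _
      _ = mul a (mul (mul (sm b) b) (sm a)) := by rw [mul_assoc]
      _ = mul a (mul (mul b (sm b)) (sm a)) := by rw [mul_comm (sm b) b]
      _ = mul a (mul (sm a) (mul b (sm b))) := by rw [mul_comm (mul b (sm b))]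
      _ = mul (mul a (sm a)) (mul b (sm b)) := by rw [mul_assoc]
  have h4 : mul (mul a (sm a)) (mul b (sm b)) ≤ mul e e := mono2 _ _ _ _ (key a) (key b)
  calc c ≤ mul c c := h1
    _ ≤ mul (mul a (sm b)) (mul b (sm a)) := h2
    _ = mul (mul a (sm a)) (mul b (sm b)) := h3
    _ ≤ mul e e := h4
    _ = e := mul_e e
end

section
/- Let A be a distributive lattice that is also a commutative monoid under an operation · with identity e, such that · is monotone in each argument, x ≤ x·x for all x, there is an involution ∼ with ∼∼x = x, the law 'z·x ≤ y implies z·∼y ≤ ∼x' holds, and ∼e = e. Define the residual x → y := ∼(x·∼y). Then prelinearity holds: for all a, b ∈ A, e ≤ (a → b) ⊔ (b → a). -/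
/-- Odd Sugihara monoids are prelinear: with `x → y := ∼(x · ∼y)`,
`e ≤ (a → b) ⊔ (b → a)`. -/
theorem osm_prelinear {A : Type*} [DistribLattice A]
    (mul : A → A → A) (sm : A → A) (e : A)
    (mul_comm : ∀ x y : A, mul x y = mul y x)
    (mul_assoc : ∀ x y z : A, mul (mul x y) z = mul x (mul y z))
    (mul_e : ∀ x : A, mul x e = x)
    (mul_mono : ∀ x y z : A, x ≤ y → mul x z ≤ mul y z)
    (sq : ∀ x : A, x ≤ mul x x)
    (invol : ∀ x : A, sm (sm x) = x)
    (contra : ∀ x y z : A, mul z x ≤ y → mul z (sm y) ≤ sm x)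
    (sm_e : sm e = e) :
    ∀ a b : A, e ≤ sm (mul a (sm b)) ⊔ sm (mul b (sm a)) := by
  -- sm is antitone
  have anti : ∀ x y : A, x ≤ y → sm y ≤ sm x := by
    intro x y h
    have := contra x y e (by rwa [mul_comm, mul_e])
    rwa [mul_comm, mul_e] at this
  -- x · ∼x ≤ e
  have neg : ∀ x : A, mul x (sm x) ≤ e := by
    intro x
    have := contra e x x (le_of_eq (mul_e x))
    rwa [sm_e] at this
  -- sm turns meet into join
  have smeet : ∀ x y : A, sm (x ⊓ y) = sm x ⊔ sm y := by
    intro x y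
    apply le_antisymm
    · have hx : sm (sm x ⊔ sm y) ≤ x := by
        have := anti (sm x) (sm x ⊔ sm y) le_sup_left
        rwa [invol] at this
      have hy : sm (sm x ⊔ sm y) ≤ y := by
        have := anti (sm y) (sm x ⊔ sm y) le_sup_right
        rwa [invol] at this
      have := anti (sm (sm x ⊔ sm y)) (x ⊓ y) (le_inf hx hy)
      rwa [invol] at this
    · exact sup_le (anti _ _ inf_le_left) (anti _ _ inf_le_right)
  intro a b
  set p := mul a (sm b) with hp
  set q := mul b (sm a) with hq
  -- p·q = (a·∼a)·(b·∼b)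
  have hpq : mul p q = mul (mul a (sm a)) (mul b (sm b)) := by
    rw [hp, hq]
    rw [mul_assoc, mul_assoc]
    congr 1
    rw [← mul_assoc, ← mul_assoc, mul_comm (sm b) b, mul_comm (mul b (sm b)) (sm a), ← mul_assoc]
  have h1 : mul p q ≤ e := by
    rw [hpq]
    calc mul (mul a (sm a)) (mul b (sm b))
        ≤ mul e (mul b (sm b)) := mul_mono _ _ _ (neg a)
      _ = mul b (sm b) := by rw [mul_comm, mul_e]
      _ ≤ e := neg b
  have h2 : p ⊓ q ≤ e := by
    calc p ⊓ q ≤ mul (p ⊓ q) (p ⊓ q) := sq _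
      _ ≤ mul p (p ⊓ q) := mul_mono _ _ _ inf_le_left
      _ = mul (p ⊓ q) p := mul_comm _ _
      _ ≤ mul q p := mul_mono _ _ _ inf_le_right
      _ = mul p q := mul_comm _ _
      _ ≤ e := h1
  have := anti _ _ h2
  rwa [sm_e, smeet] at this
end

section
/- Let A be a bounded odd Sugihara monoid, i.e., a bounded distributive lattice with bottom 0 and top 1 that is a commutative monoid under · with identity e, with · monotone in each argument, x ≤ x·x, an involution ∼ with ∼∼x = x, the law 'z·x ≤ y implies z·∼y ≤ ∼x', and ∼e = e. Then the following are equivalent: (A6) e ≤ x ⊔ ∼(x·1) holds for all x ∈ A, and (A6′) (x·(y ⊓ ∼y)) ⊓ (y ⊔ ∼y) ≤ e holds for all x, y ∈ A. -/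
/-- In a bounded odd Sugihara monoid, equation (A6) `e ≤ x ⊔ ∼(x · 1)` holds
iff equation (A6′) `(x · (y ⊓ ∼y)) ⊓ (y ⊔ ∼y) ≤ e` holds. -/
theorem bosm_A6_iff_A6' {A : Type*} [DistribLattice A] [BoundedOrder A]
    (mul : A → A → A) (sm : A → A) (e : A)
    (mul_comm : ∀ x y : A, mul x y = mul y x)
    (mul_assoc : ∀ x y z : A, mul (mul x y) z = mul x (mul y z))
    (mul_e : ∀ x : A, mul x e = x)
    (mul_mono : ∀ x y z : A, x ≤ y → mul x z ≤ mul y z)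
    (sq : ∀ x : A, x ≤ mul x x)
    (invol : ∀ x : A, sm (sm x) = x)
    (contra : ∀ x y z : A, mul z x ≤ y → mul z (sm y) ≤ sm x)
    (sm_e : sm e = e) :
    (∀ x : A, e ≤ x ⊔ sm (mul x ⊤)) ↔
      (∀ x y : A, mul x (y ⊓ sm y) ⊓ (y ⊔ sm y) ≤ e) := by
  -- sm is antitone
  have anti : ∀ a b : A, a ≤ b → sm b ≤ sm a := by
    intro a b h
    have h1 : mul e a ≤ b := by rw [mul_comm, mul_e]; exact h
    have h2 := contra a b e h1
    rwa [mul_comm, mul_e] at h2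
  -- galois pair
  have pair : ∀ a b : A, a ≤ sm b → b ≤ sm a := by
    intro a b h
    have h2 := anti a (sm b) h
    rwa [invol] at h2
  -- rotation (forward)
  have rot : ∀ z u v : A, mul z u ≤ v → mul u (sm v) ≤ sm z := by
    intro z u v h
    rw [mul_comm] at h
    exact contra z v u h
  -- rotation (backward)
  have rot' : ∀ z u v : A, mul u (sm v) ≤ sm z → mul z u ≤ v := by
    intro z u v h
    have h1 := rot u (sm v) (sm z) h
    rw [invol] at h1
    have h2 := rot (sm v) z (sm u) h1
    rwa [invol, invol] at h2
  -- x · ∼x ≤ x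
  have half : ∀ x : A, mul x (sm x) ≤ x := by
    intro x
    have ha_e : mul x (sm x) ≤ e := by
      have h1 := contra e x x (le_of_eq (mul_e x))
      rwa [sm_e] at h1
    have haa : mul (mul x (sm x)) (mul x (sm x)) ≤ e := by
      calc mul (mul x (sm x)) (mul x (sm x))
          ≤ mul e (mul x (sm x)) := mul_mono _ _ _ ha_e
        _ = mul x (sm x) := by rw [mul_comm, mul_e]
        _ ≤ e := ha_e
    have hsa : mul x (sm x) ≤ sm (mul x (sm x)) := by
      have h1 := contra (mul x (sm x)) e (mul x (sm x)) haa
      rwa [sm_e, mul_e] at h1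
    have hax : mul (mul x (sm x)) x ≤ x := rot' (mul x (sm x)) x x hsa
    calc mul x (sm x) ≤ mul (mul x x) (sm x) := mul_mono _ _ _ (sq x)
      _ = mul (mul x (sm x)) x := by
          rw [mul_assoc, mul_comm x (mul x (sm x))]
      _ ≤ x := hax
  -- x · ∼x ≤ x ⊓ ∼x
  have negsq : ∀ x : A, mul x (sm x) ≤ x ⊓ sm x := by
    intro x
    refine le_inf (half x) ?_
    have h1 := half (sm x)
    rwa [invol, mul_comm] at h1
  constructor
  · -- (A6) → (A6′)
    intro A6 x y
    have h1 : mul x (y ⊓ sm y) ≤ mul (y ⊓ sm y) ⊤ := by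
      rw [mul_comm (y ⊓ sm y) ⊤]
      exact mul_mono _ _ _ le_top
    have hj : y ⊔ sm y ≤ sm (y ⊓ sm y) :=
      sup_le (pair _ _ inf_le_right) (anti _ _ inf_le_left)
    have key : mul (y ⊓ sm y) ⊤ ⊓ sm (y ⊓ sm y) ≤ e := by
      have hA := A6 (y ⊓ sm y)
      have h2 : y ⊓ sm y ⊔ sm (mul (y ⊓ sm y) ⊤)
          ≤ sm (mul (y ⊓ sm y) ⊤ ⊓ sm (y ⊓ sm y)) := by
        refine sup_le (pair _ _ inf_le_right) ?_
        exact anti _ _ inf_le_left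
      have h3 := pair _ _ h2
      have h4 := anti _ _ hA
      rw [sm_e] at h4
      exact le_trans h3 h4
    exact le_trans (inf_le_inf h1 hj) key
  · -- (A6′) → (A6)
    intro A6' x
    have hd : sm x ⊓ mul x ⊤ ≤ e := by
      have h1 : sm x ⊓ mul x ⊤ ≤ mul ⊤ (x ⊓ sm x) := by
        calc sm x ⊓ mul x ⊤
            ≤ mul (sm x ⊓ mul x ⊤) (sm x ⊓ mul x ⊤) := sq _
          _ ≤ mul (mul x ⊤) (sm x ⊓ mul x ⊤) := mul_mono _ _ _ inf_le_right
          _ = mul (sm x ⊓ mul x ⊤) (mul x ⊤) := mul_comm _ _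
          _ ≤ mul (sm x) (mul x ⊤) := mul_mono _ _ _ inf_le_left
          _ = mul ⊤ (mul x (sm x)) := by
              rw [mul_comm (sm x) (mul x ⊤), mul_assoc, mul_comm ⊤ (sm x),
                ← mul_assoc, mul_comm (mul x (sm x)) ⊤]
          _ ≤ mul ⊤ (x ⊓ sm x) := by
              rw [mul_comm ⊤ (mul x (sm x)), mul_comm ⊤ (x ⊓ sm x)]
              exact mul_mono _ _ _ (negsq x)
      have h2 : sm x ⊓ mul x ⊤ ≤ x ⊔ sm x := le_trans inf_le_left le_sup_right
      exact le_trans (le_inf h1 h2) (A6' ⊤ x)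
    have h3 : e ≤ sm (sm x ⊓ mul x ⊤) := by
      have := anti _ _ hd
      rwa [sm_e] at this
    have h4 : sm (sm x ⊓ mul x ⊤) ≤ x ⊔ sm (mul x ⊤) := by
      have h5 : sm (x ⊔ sm (mul x ⊤)) ≤ sm x ⊓ mul x ⊤ := by
        refine le_inf (anti _ _ le_sup_left) ?_
        have h6 := anti _ _ (le_sup_right : sm (mul x ⊤) ≤ x ⊔ sm (mul x ⊤))
        rwa [invol] at h6
      have h7 := anti _ _ h5
      rwa [invol] at h7
    exact le_trans h3 h4
end

section
/- Let B be a Boolean algebra and let C(B) = {(a, b) ∈ B × B : a ⊔ b = ⊤} be its contract algebra with meet (a, b) ⊓ (c, d) = (a ⊔ c, b ⊓ d), join (a, b) ⊔ (c, d) = (a ⊓ c, b ⊔ d), pseudo-complement ¬(a, b) = (b, bᶜ) and dual pseudo-complement D(a, b) = (aᶜ, a). Then for all contracts: (1) D(a, b) ⊓ ((a, b) ⊔ ¬(a, b)) = (b, a), i.e., the reciprocal (a, b)⁻¹ = (b, a) is given by the term Dx ⊓ (x ⊔ ¬x); and (2) ((a₁, g₁) ⊓ ¬¬(a₂, g₂))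 ⊔ (¬¬(a₁, g₁) ⊓ (a₂, g₂)) = ((a₁ ⊓ a₂) ⊔ (g₁ ⊓ g₂)ᶜ, g₁ ⊓ g₂), i.e., the composition (a₁, g₁) ∥ (a₂, g₂) = ((a₁ ⊓ a₂) ⊔ (g₁ ⊓ g₂)ᶜ, g₁ ⊓ g₂) is given by the term (x ⊓ ¬¬y) ⊔ (¬¬x ⊓ y). -/
private lemma compl_le_of_sup_eq_top {B : Type*} [BooleanAlgebra B] {a g : B}
    (h : a ⊔ g = ⊤) : gᶜ ≤ a := by
  have : gᶜ ⊓ (a ⊔ g) = gᶜ := by rw [h, inf_top_eq]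
  calc gᶜ = gᶜ ⊓ a ⊔ gᶜ ⊓ g := by rw [← inf_sup_left, this]
    _ ≤ a := by simp [inf_le_right]

/-- The reciprocal and the composition of contracts are definable from the
contract-algebra operations: `x⁻¹ = Dx ⊓ (x ⊔ ¬x)` and
`x ∥ y = (x ⊓ ¬¬y) ⊔ (¬¬x ⊓ y)`. -/
theorem reciprocal_composition_definable {B : Type*} [BooleanAlgebra B] :
    -- (1) reciprocal
    (∀ a b : B, a ⊔ b = ⊤ →
      Cmeet (Cd (a, b)) (Cjoin (a, b) (Cneg (a, b))) = ((b, a) : B × B)) ∧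
    -- (2) composition
    (∀ a₁ g₁ a₂ g₂ : B, a₁ ⊔ g₁ = ⊤ → a₂ ⊔ g₂ = ⊤ →
      Cjoin (Cmeet (a₁, g₁) (Cneg (Cneg (a₂, g₂))))
          (Cmeet (Cneg (Cneg (a₁, g₁))) (a₂, g₂)) =
        (((a₁ ⊓ a₂) ⊔ (g₁ ⊓ g₂)ᶜ, g₁ ⊓ g₂) : B × B)) := by
  constructor
  · intro a b hab
    have h : aᶜ ≤ b := compl_le_of_sup_eq_top (by rwa [sup_comm])
    simp only [Cmeet, Cjoin, Cneg, Cd, Prod.mk.injEq]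
    constructor
    · rw [sup_inf_left, compl_sup_eq_top, top_inf_eq, sup_eq_right.mpr h]
    · simp
  · intro a₁ g₁ a₂ g₂ h1 h2
    have k1 : g₁ᶜ ≤ a₁ := compl_le_of_sup_eq_top h1
    have k2 : g₂ᶜ ≤ a₂ := compl_le_of_sup_eq_top h2
    simp only [Cmeet, Cjoin, Cneg, Cd, compl_compl, Prod.mk.injEq]
    constructor
    · have e1 : a₁ ⊔ g₂ᶜ = (a₁ ⊔ g₁ᶜ) ⊔ g₂ᶜ := by rw [sup_eq_left.mpr k1]
      have e2 : g₁ᶜ ⊔ a₂ = g₁ᶜ ⊔ (a₂ ⊔ g₂ᶜ) := by rw [sup_eq_left.mpr k2]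
      rw [compl_inf, sup_inf_right, e1, e2]
      ac_rfl
    · simp
end
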